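/- arXiv:1001.2076 — 3 statements merged into one kernel-verified Lean document; each statement's English description precedes it below -/
import Mathlib

section
/- For any t₁, t₂ ∈ Λ_m, we have t₁ᴴt₂ + t₂ᴴt₁ = 0 if and only if the Hamming weight of φ(t₁) + φ(t₂) in F₂ ⊕ F₄^m is odd. -/
open Matrix

def X2 : Matrix (Fin 2) (Fin 2) ℂ := !![0, 1; 1, 0]
def Z2 : Matrix (Fin 2) (Fin 2) ℂ := !![1, 0; 0, -1]

def kronPow (m : ℕ) (B : Fin m → Matrix (Fin 2) (Fin 2) ℂ) :
    Matrix (Fin m → Fin 2) (Fin m → Fin 2) ℂ :=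
  Matrix.of fun i j => ∏ k, B k (i k) (j k)

noncomputable def skewPauliFam : Fin 4 → Matrix (Fin 2) (Fin 2) ℂ :=
  ![1, Complex.I • X2, Complex.I • Z2, Z2 * X2]

noncomputable def LamElt (m : ℕ) (p : ZMod 2 × (Fin m → Fin 4)) :
    Matrix (Fin m → Fin 2) (Fin m → Fin 2) ℂ :=
  Complex.I ^ (p.1.val) • kronPow m (fun k => skewPauliFam (p.2 k))

/-- Addition of F₄ transported to `Fin 4` via 0↔0, 1↔1, 2↔ω, 3↔ω². -/
def add4 : Fin 4 → Fin 4 → Fin 4 :=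
  ![![0, 1, 2, 3], ![1, 0, 3, 2], ![2, 3, 0, 1], ![3, 2, 1, 0]]

def addV {m : ℕ} (p q : ZMod 2 × (Fin m → Fin 4)) : ZMod 2 × (Fin m → Fin 4) :=
  (p.1 + q.1, fun k => add4 (p.2 k) (q.2 k))

def wtV {m : ℕ} (p : ZMod 2 × (Fin m → Fin 4)) : ℕ :=
  (if p.1 ≠ 0 then 1 else 0) + (Finset.univ.filter fun k => p.2 k ≠ 0).card

/-!
Write `t_p = LamElt m p`. Each factor `I₂` is Hermitian while `iX`, `iZ`, `ZX` and the global
phase `i` are skew-Hermitian, so `t_pᴴ = (-1)^{wt φ(t_p)} t_p`. Multiplying out the Kronecker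
products, `t_pᴴ t_q = r • t_{p+q}` for a nonzero real `r` (a sign), where `p + q` is the sum
`φ(t_p) + φ(t_q)`. Hence `t_qᴴ t_p = (t_pᴴ t_q)ᴴ = (-1)^w r • t_{p+q}` with `w` the weight
of `p + q`, and the sum `(1 + (-1)^w) r • t_{p+q}` vanishes exactly when `w` is odd.
-/

theorem ofReal_smul_add_conjTranspose_eq_zero_iff {n : Type*} {T : Matrix n n ℂ} {w : ℕ}
    (hT : T ≠ 0) (hTH : Tᴴ = (-1 : ℂ) ^ w • T) {r : ℝ} (hr : r ≠ 0) :
    (r : ℂ) • T + ((r : ℂ) • T)ᴴ = 0 ↔ Odd w := by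
  rw [conjTranspose_smul, hTH, Complex.star_def, Complex.conj_ofReal, smul_smul, ← add_smul,
    smul_eq_zero, or_iff_left hT]
  rcases Nat.even_or_odd w with hw | hw
  · simp [hw.neg_one_pow, Nat.not_odd_iff_even.2 hw, hr]
  · simp [hw.neg_one_pow, hw]

theorem kronPow_conjTranspose (m : ℕ) (B : Fin m → Matrix (Fin 2) (Fin 2) ℂ) :
    (kronPow m B)ᴴ = kronPow m fun k => (B k)ᴴ := by
  ext i j
  simp [kronPow, conjTranspose_apply, star_prod]

theorem kronPow_mul (m : ℕ) (B C : Fin m → Matrix (Fin 2) (Fin 2) ℂ) :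
    kronPow m B * kronPow m C = kronPow m fun k => B k * C k := by
  ext i j
  simp only [kronPow, mul_apply, of_apply, Finset.prod_univ_sum, Fintype.piFinset_univ,
    Finset.prod_mul_distrib]

theorem kronPow_smul (m : ℕ) (c : Fin m → ℂ) (B : Fin m → Matrix (Fin 2) (Fin 2) ℂ) :
    (kronPow m fun k => c k • B k) = (∏ k, c k) • kronPow m B := by
  ext i j
  simp [kronPow, Finset.prod_mul_distrib]

theorem kronPow_ne_zero (m : ℕ) (B : Fin m → Matrix (Fin 2) (Fin 2) ℂ)
    (hB : ∀ k, B k ≠ 0) : kronPow m B ≠ 0 := by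
  have hentry (k : Fin m) : ∃ i j, B k i j ≠ 0 := by
    by_contra! h
    exact hB k (Matrix.ext h)
  choose i j hij using hentry
  intro h
  have hprod : ∏ k, B k (i k) (j k) ≠ 0 := Finset.prod_ne_zero_iff.2 fun k _ => hij k
  exact hprod (congr_fun₂ h i j)

theorem skewPauliFam_ne_zero (a : Fin 4) : skewPauliFam a ≠ 0 := by
  fin_cases a <;> simp [skewPauliFam, X2, Z2, ← Matrix.ext_iff, Fin.forall_fin_two]

theorem skewPauliFam_conjTranspose (a : Fin 4) :
    (skewPauliFam a)ᴴ = (-1 : ℂ) ^ (if a ≠ 0 then 1 else 0) • skewPauliFam a := by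
  fin_cases a <;>
    · ext i j
      fin_cases i <;> fin_cases j <;> simp [skewPauliFam, X2, Z2, conjTranspose_apply]

theorem skewPauliFam_conjTranspose_mul (a b : Fin 4) :
    ∃ r : ℝ, r ≠ 0 ∧
      (skewPauliFam a)ᴴ * skewPauliFam b = (r : ℂ) • skewPauliFam (add4 a b) := by
  fin_cases a <;> fin_cases b <;>
    first
    | (refine ⟨1, one_ne_zero, ?_⟩
       ext i j
       fin_cases i <;> fin_cases j <;>
         simp [skewPauliFam, add4, X2, Z2, conjTranspose_apply, mul_apply, Fin.sum_univ_two]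
       done)
    | (refine ⟨-1, by norm_num, ?_⟩
       ext i j
       fin_cases i <;> fin_cases j <;>
         simp [skewPauliFam, add4, X2, Z2, conjTranspose_apply, mul_apply, Fin.sum_univ_two]
       done)

theorem star_I_pow_val_mul_I_pow_val (a b : ZMod 2) :
    ∃ r : ℝ, r ≠ 0 ∧
      star (Complex.I ^ a.val) * Complex.I ^ b.val = r * Complex.I ^ (a + b).val := by
  have hcases : ∀ x : ZMod 2, x = 0 ∨ x = 1 := by decide
  have hval : (1 : ZMod 2).val = 1 := rfl
  have htwo : (1 + 1 : ZMod 2) = 0 := rfl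
  rcases hcases a with rfl | rfl <;> rcases hcases b with rfl | rfl <;>
    first
    | (refine ⟨1, one_ne_zero, ?_⟩; simp [hval, htwo]; done)
    | (refine ⟨-1, by norm_num, ?_⟩; simp [hval]; done)

theorem star_I_pow_val (a : ZMod 2) :
    star (Complex.I ^ a.val) = (-1 : ℂ) ^ (if a ≠ 0 then 1 else 0) * Complex.I ^ a.val := by
  have hcases : ∀ x : ZMod 2, x = 0 ∨ x = 1 := by decide
  have hval : (1 : ZMod 2).val = 1 := rfl
  rcases hcases a with rfl | rfl <;> simp [hval]

theorem LamElt_ne_zero (m : ℕ) (p : ZMod 2 × (Fin m → Fin 4)) : LamElt m p ≠ 0 :=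
  smul_ne_zero (pow_ne_zero _ Complex.I_ne_zero)
    (kronPow_ne_zero m _ fun _ => skewPauliFam_ne_zero _)

theorem LamElt_conjTranspose (m : ℕ) (p : ZMod 2 × (Fin m → Fin 4)) :
    (LamElt m p)ᴴ = (-1 : ℂ) ^ wtV p • LamElt m p := by
  simp only [LamElt, conjTranspose_smul, kronPow_conjTranspose, skewPauliFam_conjTranspose,
    kronPow_smul, star_I_pow_val, smul_smul, Finset.prod_pow_eq_pow_sum, ← Finset.card_filter,
    wtV, pow_add]
  ring_nf

theorem LamElt_conjTranspose_mul (m : ℕ) (p q : ZMod 2 × (Fin m → Fin 4)) :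
    ∃ r : ℝ, r ≠ 0 ∧ (LamElt m p)ᴴ * LamElt m q = (r : ℂ) • LamElt m (addV p q) := by
  obtain ⟨s, hs, hphase⟩ := star_I_pow_val_mul_I_pow_val p.1 q.1
  choose r hr hpauli using fun k => skewPauliFam_conjTranspose_mul (p.2 k) (q.2 k)
  refine ⟨s * ∏ k, r k, mul_ne_zero hs (Finset.prod_ne_zero_iff.2 fun k _ => hr k), ?_⟩
  simp only [LamElt, addV, conjTranspose_smul, kronPow_conjTranspose, smul_mul_smul_comm,
    kronPow_mul, hpauli, kronPow_smul, hphase, smul_smul, Complex.ofReal_mul, Complex.ofReal_prod]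
  ring_nf

theorem LamElt_HR_orthogonal_iff_odd (m : ℕ) (p q : ZMod 2 × (Fin m → Fin 4)) :
    (LamElt m p)ᴴ * LamElt m q + (LamElt m q)ᴴ * LamElt m p = 0 ↔
      Odd (wtV (addV p q)) := by
  obtain ⟨r, hr, hpq⟩ := LamElt_conjTranspose_mul m p q
  have hqp : (LamElt m q)ᴴ * LamElt m p = ((LamElt m p)ᴴ * LamElt m q)ᴴ := by
    rw [conjTranspose_mul, conjTranspose_conjTranspose]
  rw [hqp, hpq]
  exact ofReal_smul_add_conjTranspose_eq_zero_iff (LamElt_ne_zero m _)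
    (LamElt_conjTranspose m _) hr
end

section
/- The 2m+2 vectors in F₂ ⊕ F₄^m given by y_k = [1{k even}, 0,...,0, ω², ω,...,ω] and y_{k+m} = [1{k even}, 0,...,0, 1, ω,...,ω] (with m-k zeros) for k = 1,...,m, together with y_{2m+1} = [1{m even}, ω,...,ω] and y_{2m+2} = [0,...,0], are pairwise distinct and satisfy: for all k ≠ l, the Hamming weight of y_k + y_l is odd. -/
/-- y_k = [1{k even}, 0,…,0, ω², ω,…,ω] with m−k zeros, for k = 1,…,m. -/
def yA (m k : ℕ) : ZMod 2 × (Fin m → Fin 4) :=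
  ((if Even k then 1 else 0),
    fun j => if j.val < m - k then 0 else if j.val = m - k then 3 else 2)

/-- y_{k+m} = [1{k even}, 0,…,0, 1, ω,…,ω] with m−k zeros, for k = 1,…,m. -/
def yB (m k : ℕ) : ZMod 2 × (Fin m → Fin 4) :=
  ((if Even k then 1 else 0),
    fun j => if j.val < m - k then 0 else if j.val = m - k then 1 else 2)

/-- y_{2m+1} = [1{m even}, ω,…,ω]. -/
def yTop (m : ℕ) : ZMod 2 × (Fin m → Fin 4) :=
  ((if Even m then 1 else 0), fun _ => 2)

/-- The 2m+2 vectors of the maximal-rate square orthogonal design. -/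
def squareODvectors (m : ℕ) : List (ZMod 2 × (Fin m → Fin 4)) :=
  ((List.range m).map (fun k => yA m (k + 1))) ++
  ((List.range m).map (fun k => yB m (k + 1))) ++
  [yTop m, ((0 : ZMod 2), fun _ => (0 : Fin 4))]

open Finset

lemma add4_comm (x y : Fin 4) : add4 x y = add4 y x := by
  revert x y; decide

lemma add4_eq_zero_iff (x y : Fin 4) : add4 x y = 0 ↔ x = y := by
  revert x y; decide

lemma add4_zero (x : Fin 4) : add4 x 0 = x := by
  revert x; decide

section

variable {m : ℕ}

lemma addV_comm (u v : ZMod 2 × (Fin m → Fin 4)) : addV u v = addV v u :=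
  Prod.ext (add_comm _ _) (funext fun _ => add4_comm _ _)

lemma addV_zero (u : ZMod 2 × (Fin m → Fin 4)) : addV u (0, fun _ => 0) = u :=
  Prod.ext (add_zero _) (funext fun _ => add4_zero _)

lemma wtV_addV_self (u : ZMod 2 × (Fin m → Fin 4)) : wtV (addV u u) = 0 := by
  simp [wtV, addV, add4_eq_zero_iff, CharTwo.add_self_eq_zero]

lemma wtV_eq_val_add_card (p : ZMod 2 × (Fin m → Fin 4)) :
    wtV p = p.1.val + #{k | p.2 k ≠ 0} := by
  obtain ⟨a, f⟩ := p
  fin_cases a <;> rfl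

lemma card_filter_eq_of_iff_Ico {a b : ℕ} (hb : b ≤ m) (p : Fin m → Prop) [DecidablePred p]
    (h : ∀ j : Fin m, p j ↔ a ≤ j.val ∧ j.val < b) : #{j | p j} = b - a := by
  rw [← Nat.card_Ico, ← card_map Fin.valEmbedding]
  congr 1
  ext n
  simp only [mem_map, mem_filter, mem_univ, true_and, Fin.valEmbedding_apply, mem_Ico]
  constructor
  · rintro ⟨j, hj, rfl⟩
    exact (h j).1 hj
  · intro hn
    exact ⟨⟨n, by omega⟩, (h _).2 hn, rfl⟩

end

def stepVector (m k : ℕ) (x : Fin 4) : ZMod 2 × (Fin m → Fin 4) :=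
  ((if Even k then 1 else 0),
    fun j => if j.val < m - k then 0 else if j.val = m - k then x else 2)

section

variable {m k l : ℕ} {x y : Fin 4}

lemma stepVector_fst : (stepVector m k x).1 = ((k + 1 : ℕ) : ZMod 2) := by
  rcases Nat.even_or_odd k with hk | hk
  · rw [stepVector, if_pos hk, eq_comm, ZMod.natCast_eq_one_iff_odd]
    exact hk.add_one
  · rw [stepVector, if_neg (Nat.not_even_iff_odd.2 hk), eq_comm, ZMod.natCast_eq_zero_iff_even]
    exact hk.add_one

lemma stepVector_snd_ne_zero_iff (hx : x ≠ 0) (j : Fin m) :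
    (stepVector m k x).2 j ≠ 0 ↔ m - k ≤ j.val := by
  simp only [stepVector]
  split_ifs <;> simp_all
  omega

lemma addV_stepVector_snd_ne_zero_iff (hkl : k ≤ l) (hlm : l ≤ m) (hx : x ≠ 2) (hy : y ≠ 0)
    (hne : (k, x) ≠ (l, y)) (j : Fin m) :
    (addV (stepVector m k x) (stepVector m l y)).2 j ≠ 0 ↔ m - l ≤ j.val ∧ j.val < m - k + 1 := by
  simp only [addV, stepVector, ne_eq, add4_eq_zero_iff]
  split_ifs <;> simp_all <;> omega

lemma odd_wtV_stepVector (hkm : k ≤ m) (hx : x ≠ 0) : Odd (wtV (stepVector m k x)) := by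
  rw [wtV_eq_val_add_card, stepVector_fst, ZMod.val_natCast,
    card_filter_eq_of_iff_Ico le_rfl _ fun j => (stepVector_snd_ne_zero_iff hx j).trans
      (and_iff_left j.isLt).symm, Nat.odd_iff]
  omega

lemma odd_wtV_addV_stepVector (hk : 1 ≤ k) (hkl : k ≤ l) (hlm : l ≤ m) (hx : x ≠ 2) (hy : y ≠ 0)
    (hne : (k, x) ≠ (l, y)) : Odd (wtV (addV (stepVector m k x) (stepVector m l y))) := by
  have hfst : (addV (stepVector m k x) (stepVector m l y)).1 = ((k + 1 + (l + 1) : ℕ) : ZMod 2) := by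
    simp only [addV, stepVector_fst, Nat.cast_add]
  rw [wtV_eq_val_add_card, hfst, ZMod.val_natCast, card_filter_eq_of_iff_Ico (by omega) _
    (addV_stepVector_snd_ne_zero_iff hkl hlm hx hy hne), Nat.odd_iff]
  omega

end

def stepLabels (m : ℕ) : List (ℕ × Fin 4) :=
  (List.range m).map (fun k => (k + 1, 3)) ++ (List.range m).map (fun k => (k + 1, 1)) ++ [(m, 2)]

section

variable {m : ℕ}

lemma mem_stepLabels {p : ℕ × Fin 4} :
    p ∈ stepLabels m ↔ (1 ≤ p.1 ∧ p.1 ≤ m ∧ (p.2 = 1 ∨ p.2 = 3)) ∨ p = (m, 2) := by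
  obtain ⟨k, x⟩ := p
  simp only [stepLabels, List.mem_append, List.mem_map, List.mem_range, List.mem_singleton,
    Prod.mk.injEq]
  constructor
  · rintro ((⟨i, hi, rfl, rfl⟩ | ⟨i, hi, rfl, rfl⟩) | h)
    · exact Or.inl ⟨by omega, by omega, Or.inr rfl⟩
    · exact Or.inl ⟨by omega, by omega, Or.inl rfl⟩
    · exact Or.inr h
  · rintro (⟨hk, hkm, rfl | rfl⟩ | h)
    · exact Or.inl (Or.inr ⟨k - 1, by omega, by omega, rfl⟩)
    · exact Or.inl (Or.inl ⟨k - 1, by omega, by omega, rfl⟩)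
    · exact Or.inr h

lemma stepLabels_nodup : (stepLabels m).Nodup := by
  have hinj : ∀ x : Fin 4, Function.Injective fun k : ℕ => (k + 1, x) := fun x k l h => by
    simpa using h
  simp [stepLabels, List.nodup_append, List.nodup_range.map (hinj _)]
  omega

lemma le_and_ne_zero_of_mem_stepLabels {p : ℕ × Fin 4} (hp : p ∈ stepLabels m) :
    p.1 ≤ m ∧ p.2 ≠ 0 := by
  rcases mem_stepLabels.1 hp with ⟨-, hkm, hx | hx⟩ | rfl <;> simp_all

lemma odd_wtV_stepVector_of_mem {p : ℕ × Fin 4} (hp : p ∈ stepLabels m) :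
    Odd (wtV (stepVector m p.1 p.2)) :=
  odd_wtV_stepVector (le_and_ne_zero_of_mem_stepLabels hp).1
    (le_and_ne_zero_of_mem_stepLabels hp).2

lemma odd_wtV_addV_stepVector_of_mem {p q : ℕ × Fin 4} (hp : p ∈ stepLabels m)
    (hq : q ∈ stepLabels m) (hne : p ≠ q) :
    Odd (wtV (addV (stepVector m p.1 p.2) (stepVector m q.1 q.2))) := by
  have key : ∀ {p q : ℕ × Fin 4}, 1 ≤ p.1 → (p.2 = 1 ∨ p.2 = 3) → q ∈ stepLabels m →
      p.1 ≤ q.1 → p ≠ q → Odd (wtV (addV (stepVector m p.1 p.2) (stepVector m q.1 q.2))) := by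
    intro p q hk hx hq hpq hne
    have hx2 : p.2 ≠ 2 := by rcases hx with h | h <;> rw [h] <;> decide
    obtain ⟨hqm, hq0⟩ := le_and_ne_zero_of_mem_stepLabels hq
    exact odd_wtV_addV_stepVector hk hpq hqm hx2 hq0 hne
  rcases mem_stepLabels.1 hp with ⟨hk, -, hx⟩ | rfl <;>
    rcases mem_stepLabels.1 hq with ⟨hl, -, hy⟩ | rfl
  · rcases le_total p.1 q.1 with h | h
    · exact key hk hx hq h hne
    · rw [addV_comm]
      exact key hl hy hp h hne.symm
  · exact key hk hx hq (le_and_ne_zero_of_mem_stepLabels hp).1 hne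
  · rw [addV_comm]
    exact key hl hy hp (le_and_ne_zero_of_mem_stepLabels hq).1 hne.symm
  · exact absurd rfl hne

lemma squareODvectors_eq :
    squareODvectors m = (stepLabels m).map (fun p => stepVector m p.1 p.2) ++ [(0, fun _ => 0)] := by
  have htop : yTop m = stepVector m m 2 := by
    refine Prod.ext rfl (funext fun j => ?_)
    simp [yTop, stepVector]
  simp only [squareODvectors, stepLabels, htop, List.map_append, List.map_map, List.map_singleton,
    List.append_assoc, List.singleton_append]
  rfl

end

theorem squareOD_vectors_distinct_pairwise_odd_general (m : ℕ) :
    (squareODvectors m).Nodup ∧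
    (squareODvectors m).Pairwise (fun u v => Odd (wtV (addV u v))) := by
  have hodd : (squareODvectors m).Pairwise (fun u v => Odd (wtV (addV u v))) := by
    rw [squareODvectors_eq, List.pairwise_append, List.pairwise_map]
    refine ⟨stepLabels_nodup.imp_of_mem fun hp hq hne => odd_wtV_addV_stepVector_of_mem hp hq hne,
      List.pairwise_singleton _ _, ?_⟩
    simp only [List.mem_map, List.mem_singleton]
    rintro _ ⟨p, hp, rfl⟩ _ rfl
    rw [addV_zero]
    exact odd_wtV_stepVector_of_mem hp
  refine ⟨hodd.imp fun h heq => ?_, hodd⟩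
  rw [heq, wtV_addV_self] at h
  exact Nat.not_odd_zero h

theorem squareOD_vectors_distinct_pairwise_odd (m : ℕ) (hm : 1 ≤ m) :
    (squareODvectors m).Nodup ∧
    (squareODvectors m).Pairwise (fun u v => Odd (wtV (addV u v))) :=
  squareOD_vectors_distinct_pairwise_odd_general m
end

section
/- Full-diversity extension: let A₁,...,A_{n+1} be invertible N×N complex matrices, and 𝒜₁,...,𝒜_n finite subsets of ℝ such that for any two distinct tuples (a₁,...,a_n) ≠ (b₁,...,b_n) in 𝒜₁×...×𝒜_n, the matrix Σᵢ (aᵢ - bᵢ)Aᵢ is invertible. Then for any positive integer Q there exists 𝒜_{n+1} ⊆ ℝ with |𝒜_{n+1}| = Q such that for any distinct tuples (a₁,...,a_{n+1}) ≠ (b₁,...,b_{n+1}) in 𝒜₁×...×𝒜_{n+1}, the matrix Σᵢ₌₁^{n+1} (aᵢ - bᵢ)Aᵢ is invertible. -/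
/-!
For fixed prefixes `a', b'` put `M = ∑ i ≤ n, (a'ᵢ - b'ᵢ) • Aᵢ`. Since `A_{n+1}` is invertible,
`M + d • A_{n+1}` is singular exactly when `d` lies in the real spectrum of `-(A_{n+1}⁻¹ * M)`,
which is finite. So only finitely many values of the last-coordinate difference are bad, and any
`Q` reals whose pairwise differences avoid all of them form the new constellation.
-/

open Matrix Pointwise

theorem setOf_not_isUnit_add_smul_units_eq_spectrum {K R : Type*} [CommRing K] [Ring R]
    [Algebra K R] (u : Rˣ) (m : R) :
    {c : K | ¬IsUnit (m + c • (u : R))} = spectrum K (-(↑u⁻¹ * m)) := by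
  ext c
  have hfactor : m + c • (u : R) = u * (algebraMap K R c - -(↑u⁻¹ * m)) := by
    rw [sub_neg_eq_add, mul_add, Units.mul_inv_cancel_left, Algebra.algebraMap_eq_smul_one,
      mul_smul_comm, mul_one, add_comm]
  rw [Set.mem_ofPred_eq, spectrum.mem_iff, hfactor, Units.isUnit_units_mul]

theorem exists_finset_card_eq_pairwise_sub_notMem {G : Type*} [AddCommGroup G] [Infinite G]
    {B : Set G} (hB : B.Finite) (k : ℕ) :
    ∃ T : Finset G, T.card = k ∧ (T : Set G).Pairwise fun s t => s - t ∉ B := by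
  classical
  induction k with
  | zero => exact ⟨∅, rfl, by simp⟩
  | succ k ih =>
    obtain ⟨T, hTcard, hT⟩ := ih
    have hforbidden : ((T : Set G) ∪ (T + B) ∪ (T - B)).Finite :=
      (T.finite_toSet.union (T.finite_toSet.add hB)).union (T.finite_toSet.sub hB)
    obtain ⟨x, hx⟩ := hforbidden.infinite_compl.nonempty
    simp only [Set.mem_compl_iff, Set.mem_union, not_or] at hx
    obtain ⟨⟨hxT, hxadd⟩, hxsub⟩ := hx
    refine ⟨insert x T, by rw [Finset.card_insert_of_notMem hxT, hTcard], ?_⟩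
    rw [Finset.coe_insert, Set.pairwise_insert]
    refine ⟨hT, fun t ht _ => ⟨fun h => hxadd ?_, fun h => hxsub ?_⟩⟩
    · exact Set.mem_add.2 ⟨t, ht, x - t, h, add_sub_cancel t x⟩
    · exact Set.mem_sub.2 ⟨t, ht, t - x, h, sub_sub_cancel t x⟩

theorem full_diversity_extension_general (N n : ℕ)
    (A : Fin (n + 1) → Matrix (Fin N) (Fin N) ℂ)
    (hA : ∀ i, IsUnit (A i))
    (𝒜 : Fin n → Finset ℝ)
    (hfd : ∀ a b : Fin n → ℝ, (∀ i, a i ∈ 𝒜 i) → (∀ i, b i ∈ 𝒜 i) → a ≠ b →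
      IsUnit (∑ i : Fin n, (a i - b i) • A i.castSucc))
    (Q : ℕ) :
    ∃ 𝒜' : Finset ℝ, 𝒜'.card = Q ∧
      ∀ a b : Fin (n + 1) → ℝ,
        (∀ i : Fin n, a i.castSucc ∈ 𝒜 i) → a (Fin.last n) ∈ 𝒜' →
        (∀ i : Fin n, b i.castSucc ∈ 𝒜 i) → b (Fin.last n) ∈ 𝒜' →
        a ≠ b →
        IsUnit (∑ i : Fin (n + 1), (a i - b i) • A i) := by
  set u := (hA (Fin.last n)).unit
  set M : (Fin n → ℝ) → (Fin n → ℝ) → Matrix (Fin N) (Fin N) ℂ :=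
    fun a b => ∑ i : Fin n, (a i - b i) • A i.castSucc
  set bad : Set ℝ := ⋃ a ∈ Fintype.piFinset 𝒜, ⋃ b ∈ Fintype.piFinset 𝒜,
    {d : ℝ | ¬IsUnit (M a b + d • (u : Matrix (Fin N) (Fin N) ℂ))}
  have hbad : bad.Finite := by
    refine Set.Finite.biUnion (Finset.finite_toSet _) fun a _ =>
      Set.Finite.biUnion (Finset.finite_toSet _) fun b _ => ?_
    rw [setOf_not_isUnit_add_smul_units_eq_spectrum]
    exact finite_real_spectrum
  obtain ⟨T, hTcard, hT⟩ := exists_finset_card_eq_pairwise_sub_notMem hbad Q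
  refine ⟨T, hTcard, fun a b ha haT hb hbT hab => ?_⟩
  rw [Fin.sum_univ_castSucc]
  by_cases hlast : a (Fin.last n) = b (Fin.last n)
  · rw [hlast, sub_self, zero_smul, add_zero]
    exact hfd _ _ ha hb fun h => hab (funext (Fin.lastCases hlast (congrFun h)))
  · by_contra hsing
    refine hT haT hbT hlast (Set.mem_biUnion (Fintype.mem_piFinset.2 ha) ?_)
    exact Set.mem_biUnion (Fintype.mem_piFinset.2 hb) hsing

/-- Full-diversity extension: a full-diversity single-real-symbol encodable
STBC in n symbols with invertible weight matrices can be extended by one more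
symbol over a constellation of any prescribed size Q, preserving full
diversity. -/
theorem full_diversity_extension (N n : ℕ)
    (A : Fin (n + 1) → Matrix (Fin N) (Fin N) ℂ)
    (hA : ∀ i, IsUnit (A i))
    (𝒜 : Fin n → Finset ℝ)
    (hfd : ∀ a b : Fin n → ℝ, (∀ i, a i ∈ 𝒜 i) → (∀ i, b i ∈ 𝒜 i) → a ≠ b →
      IsUnit (∑ i : Fin n, (a i - b i) • A i.castSucc))
    (Q : ℕ) (hQ : 0 < Q) :
    ∃ 𝒜' : Finset ℝ, 𝒜'.card = Q ∧
      ∀ a b : Fin (n + 1) → ℝ,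
        (∀ i : Fin n, a i.castSucc ∈ 𝒜 i) → a (Fin.last n) ∈ 𝒜' →
        (∀ i : Fin n, b i.castSucc ∈ 𝒜 i) → b (Fin.last n) ∈ 𝒜' →
        a ≠ b →
        IsUnit (∑ i : Fin (n + 1), (a i - b i) • A i) :=
  full_diversity_extension_general N n A hA 𝒜 hfd Q
end
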